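/- If ent_set(σ_φ) = +∞ and ent_set(σ_{φ,𝔴}) = 0 (equivalently, by the entropy dichotomy: σ_φ is not quasi-periodic while σ_{φ,𝔴} is quasi-periodic), then σ_{φ,𝔴} : F^Γ → F^Γ is not finite fibre. -/
import Mathlib


open Function Set

/-- The weighted generalized shift `σ_{φ,𝔴} : F^Γ → F^Γ`,
`σ_{φ,𝔴}((x_α)_α) = (𝔴_α x_{φ(α)})_α`. The unweighted shift `σ_φ` is `wshift φ 1`. -/
def wshift {F : Type*} [Field F] {Γ : Type*} (φ : Γ → Γ) (w : Γ → F) :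
    (Γ → F) → (Γ → F) :=
  fun x α => w α * x (φ α)
/-- `f` is finite fibre if every fibre `f⁻¹(y)` is finite. -/
def FiniteFibre {A : Type*} (f : A → A) : Prop := ∀ y : A, (f ⁻¹' {y}).Finite
/-- An `f`-orbit: a sequence with `f (a n) = a (n+1)` for all `n`. -/
def IsOrbit {A : Type*} (f : A → A) (a : ℕ → A) : Prop := ∀ n : ℕ, f (a n) = a (n + 1)

/-- There exist `m` injective `f`-orbits with pairwise disjoint ranges. -/
def HasDisjointOrbits {A : Type*} (f : A → A) (m : ℕ) : Prop :=
  ∃ a : Fin m → ℕ → A, (∀ i, IsOrbit f (a i) ∧ Function.Injective (a i)) ∧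
    ∀ i j, i ≠ j → Disjoint (Set.range (a i)) (Set.range (a j))

/-- The infinite orbit number `𝗈(f) ∈ ℕ ∪ {+∞}`. -/
noncomputable def orbitNumber {A : Type*} (f : A → A) : ℕ∞ :=
  sSup ({0} ∪ {m : ℕ∞ | ∃ k : ℕ, m = (k : ℕ∞) ∧ 1 ≤ k ∧ HasDisjointOrbits f k})

/-- Covariant set-theoretical entropy: `ent_set f = 𝗈(f)`. -/
noncomputable def entSet {A : Type*} (f : A → A) : ℕ∞ := orbitNumber f

/-! ### Auxiliary lemmas -/

section Aux

variable {F : Type*} [Field F] {Γ : Type*}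

lemma wshift_iterate (φ : Γ → Γ) (w : Γ → F) (n : ℕ) (x : Γ → F) (α : Γ) :
    (wshift φ w)^[n] x α = (∏ i ∈ Finset.range n, w (φ^[i] α)) * x (φ^[n] α) := by
  induction n generalizing x with
  | zero => simp
  | succ n ih =>
      rw [Function.iterate_succ_apply, ih, Finset.prod_range_succ,
        Function.iterate_succ_apply']
      simp only [wshift]
      ring

lemma shift_iterate (φ : Γ → Γ) (n : ℕ) (x : Γ → F) :
    (wshift φ (1 : Γ → F))^[n] x = fun β => x (φ^[n] β) := by
  funext β
  rw [wshift_iterate]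
  simp

lemma orbit_eq_iterate {A : Type*} (f : A → A) (a : ℕ → A) (h : IsOrbit f a) (n : ℕ) :
    a n = f^[n] (a 0) := by
  induction n with
  | zero => rfl
  | succ n ih => rw [← h n, ih, Function.iterate_succ_apply']

/-- From `entSet σ_φ = ⊤`, extract an injective family `n ↦ x₀ ∘ φ^[n]`. -/
lemma h1_extract (φ : Γ → Γ)
    (h1 : entSet (wshift φ (1 : Γ → F)) = ⊤) :
    ∃ x₀ : Γ → F, Function.Injective fun n : ℕ => (fun β => x₀ (φ^[n] β)) := by
  have hex : ∃ k : ℕ, 1 ≤ k ∧ HasDisjointOrbits (wshift φ (1 : Γ → F)) k := by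
    by_contra h
    push_neg at h
    have hset : ({0} ∪ {m : ℕ∞ | ∃ k : ℕ, m = (k : ℕ∞) ∧ 1 ≤ k ∧
        HasDisjointOrbits (wshift φ (1 : Γ → F)) k}) = ({0} : Set ℕ∞) := by
      ext m
      simp only [Set.mem_union, Set.mem_singleton_iff, Set.mem_setOf_eq]
      constructor
      · rintro (h0 | ⟨k, rfl, hk, hH⟩)
        · exact h0
        · exact absurd hH (h k hk)
      · exact Or.inl
    rw [entSet, orbitNumber, hset, sSup_singleton] at h1
    simp at h1
  obtain ⟨k, hk, a, ha, _⟩ := hex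
  set i : Fin k := ⟨0, hk⟩
  obtain ⟨horb, hinj⟩ := ha i
  refine ⟨a i 0, ?_⟩
  have key : ∀ n : ℕ, a i n = fun β => a i 0 (φ^[n] β) := by
    intro n
    rw [orbit_eq_iterate _ _ horb n, shift_iterate]
  intro n m hnm
  apply hinj
  rw [key n, key m]
  exact hnm

lemma iter_distinct (φ : Γ → Γ)
    (hx : ∃ x₀ : Γ → F, Function.Injective fun n : ℕ => (fun β => x₀ (φ^[n] β))) :
    Function.Injective fun n : ℕ => φ^[n] := by
  obtain ⟨x₀, h⟩ := hx
  intro n m hnm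
  apply h
  simp only at hnm ⊢
  rw [hnm]

/-- From `entSet σ_{φ,w} = 0`, every point is preperiodic. -/
lemma h2_extract (φ : Γ → Γ) (w : Γ → F)
    (h2 : entSet (wshift φ w) = 0) (x : Γ → F) :
    ∃ n m : ℕ, n < m ∧ (wshift φ w)^[n] x = (wshift φ w)^[m] x := by
  by_contra h
  push_neg at h
  have hinj : Function.Injective fun n : ℕ => (wshift φ w)^[n] x := by
    intro n m hnm
    rcases lt_trichotomy n m with hlt | he | hgt
    · exact absurd hnm (h n m hlt)
    · exact he
    · exact absurd hnm.symm (h m n hgt)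
  have hH : HasDisjointOrbits (wshift φ w) 1 := by
    refine ⟨fun _ => fun n => (wshift φ w)^[n] x, fun i => ⟨?_, hinj⟩, ?_⟩
    · intro n
      exact (Function.iterate_succ_apply' (wshift φ w) n x).symm
    · intro i j hij
      exact absurd (Subsingleton.elim i j) hij
  have hle : (1 : ℕ∞) ≤ entSet (wshift φ w) := by
    rw [entSet, orbitNumber]
    exact le_sSup (Or.inr ⟨1, by norm_num, le_refl 1, hH⟩)
  rw [h2] at hle
  simp at hle

lemma eventually_periodic (φ : Γ → Γ) (w : Γ → F)
    (h2 : entSet (wshift φ w) = 0) (x : Γ → F) :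
    ∃ n d : ℕ, 1 ≤ d ∧ ∀ t, n ≤ t →
      (wshift φ w)^[t] x = (wshift φ w)^[t + d] x := by
  obtain ⟨n, m, hlt, heq⟩ := h2_extract φ w h2 x
  refine ⟨n, m - n, by omega, ?_⟩
  intro t ht
  calc (wshift φ w)^[t] x = (wshift φ w)^[t - n] ((wshift φ w)^[n] x) := by
        rw [← Function.iterate_add_apply]
        congr 1
        omega
    _ = (wshift φ w)^[t - n] ((wshift φ w)^[m] x) := by rw [heq]
    _ = (wshift φ w)^[t + (m - n)] x := by
        rw [← Function.iterate_add_apply]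
        congr 1
        omega

lemma per_mul {A : Type*} (G : ℕ → A) (n d : ℕ)
    (h : ∀ t, n ≤ t → G t = G (t + d)) :
    ∀ k t, n ≤ t → G t = G (t + k * d) := by
  intro k
  induction k with
  | zero => intro t _; simp
  | succ k ih =>
      intro t ht
      calc G t = G (t + k * d) := ih t ht
        _ = G (t + k * d + d) := h _ (by omega)
        _ = G (t + (k + 1) * d) := by rw [show t + k * d + d = t + (k + 1) * d by ring]

lemma common_period (φ : Γ → Γ) (w : Γ → F)
    (h2 : entSet (wshift φ w) = 0) (x : Γ → F) :
    ∃ N P : ℕ, 1 ≤ P ∧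
      (wshift φ w)^[N] (1 : Γ → F) = (wshift φ w)^[N + P] (1 : Γ → F) ∧
      (wshift φ w)^[N] x = (wshift φ w)^[N + P] x := by
  obtain ⟨n₁, d₁, hd₁, h₁⟩ := eventually_periodic φ w h2 (1 : Γ → F)
  obtain ⟨n₂, d₂, hd₂, h₂⟩ := eventually_periodic φ w h2 x
  refine ⟨n₁ + n₂, d₁ * d₂, Nat.one_le_iff_ne_zero.mpr (by positivity), ?_, ?_⟩
  · have := per_mul (fun t => (wshift φ w)^[t] (1 : Γ → F)) n₁ d₁ h₁ d₂ (n₁ + n₂)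
      (by omega)
    simpa [show n₁ + n₂ + d₂ * d₁ = n₁ + n₂ + d₁ * d₂ by ring] using this
  · have := per_mul (fun t => (wshift φ w)^[t] x) n₂ d₂ h₂ d₁ (n₁ + n₂) (by omega)
    simpa using this

/-- Finite fibre implies the complement of `φ '' supp w` is finite. -/
lemma finite_compl_image (φ : Γ → Γ) (w : Γ → F)
    (hFF : FiniteFibre (wshift φ w)) :
    ((φ '' {α | w α ≠ 0})ᶜ : Set Γ).Finite := by
  by_contra h
  have hinf : ((φ '' {α | w α ≠ 0})ᶜ : Set Γ).Infinite := h
  classical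
  set f : Γ → (Γ → F) := fun β γ => if γ = β then 1 else 0 with hf
  have hmap : ∀ β ∈ (φ '' {α | w α ≠ 0})ᶜ, f β ∈ wshift φ w ⁻¹' {0} := by
    intro β hβ
    simp only [Set.mem_preimage, Set.mem_singleton_iff]
    funext α
    simp only [wshift, Pi.zero_apply, hf]
    by_cases hw : w α = 0
    · simp [hw]
    · have hne : φ α ≠ β := fun hc => hβ ⟨α, hw, hc⟩
      simp [hne]
  have hinjOn : Set.InjOn f ((φ '' {α | w α ≠ 0})ᶜ) := by
    intro b _ b' _ hbb
    by_contra hne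
    have := congrFun hbb b
    simp only [hf, if_pos rfl] at this
    rw [if_neg hne] at this
    exact one_ne_zero this
  have himg : (f '' ((φ '' {α | w α ≠ 0})ᶜ)).Infinite := hinf.image hinjOn
  have hsub : f '' ((φ '' {α | w α ≠ 0})ᶜ) ⊆ wshift φ w ⁻¹' {0} := by
    rintro y ⟨β, hβ, rfl⟩
    exact hmap β hβ
  exact (himg.mono hsub) (hFF 0)

/-- The sets `B_n = φ^[n] '' Λ_n` are cofinite. -/
lemma Bcofinite (φ : Γ → Γ) (w : Γ → F)
    (hD : ((φ '' {α | w α ≠ 0})ᶜ : Set Γ).Finite) :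
    ∀ n : ℕ, ((φ^[n] '' {α | ∀ i < n, w (φ^[i] α) ≠ 0})ᶜ : Set Γ).Finite := by
  intro n
  induction n with
  | zero =>
      have : (φ^[0] '' {α : Γ | ∀ i < 0, w (φ^[i] α) ≠ 0}) = Set.univ := by
        simp
      rw [this, Set.compl_univ]
      exact Set.finite_empty
  | succ n ih =>
      apply Set.Finite.subset (hD.union (ih.image φ))
      intro β hβ
      simp only [Set.mem_compl_iff] at hβ
      by_cases hβD : β ∈ φ '' {α | w α ≠ 0}
      · right
        obtain ⟨γ, hγW, rfl⟩ := hβD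
        refine ⟨γ, ?_, rfl⟩
        intro hγB
        obtain ⟨α, hα, rfl⟩ := hγB
        apply hβ
        refine ⟨α, ?_, by rw [Function.iterate_succ_apply']⟩
        intro i hi
        rcases Nat.lt_succ_iff_lt_or_eq.mp hi with hlt | heq
        · exact hα i hlt
        · subst heq; exact hγW
      · left
        exact hβD

/-- Under the hypotheses, every `X` almost agrees with `X ∘ φ^[p]` for some `p ≥ 1`. -/
lemma cofinite_agree (φ : Γ → Γ) (w : Γ → F)
    (h2 : entSet (wshift φ w) = 0) (hFF : FiniteFibre (wshift φ w)) (X : Γ → F) :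
    ∃ p : ℕ, 1 ≤ p ∧ {β : Γ | X β ≠ X (φ^[p] β)}.Finite := by
  obtain ⟨N, P, hP, hw1, hx⟩ := common_period φ w h2 X
  refine ⟨P, hP, Set.Finite.subset (Bcofinite φ w (finite_compl_image φ w hFF) N) ?_⟩
  intro β hβ
  simp only [Set.mem_setOf_eq] at hβ
  simp only [Set.mem_compl_iff]
  intro hmem
  apply hβ
  obtain ⟨α, hα, rfl⟩ := hmem
  have e1 := congrFun hx α
  rw [wshift_iterate, wshift_iterate] at e1
  have e2 := congrFun hw1 α
  rw [wshift_iterate, wshift_iterate] at e2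
  simp only [Pi.one_apply, mul_one] at e2
  rw [← e2] at e1
  have hprod : (∏ i ∈ Finset.range N, w (φ^[i] α)) ≠ 0 :=
    Finset.prod_ne_zero_iff.mpr fun i hi => hα i (Finset.mem_range.mp hi)
  have e3 := mul_left_cancel₀ hprod e1
  rw [e3, show N + P = P + N from Nat.add_comm N P, Function.iterate_add_apply]

/-- If all iterates of `φ` are distinct, each `{β | φ^[p] β ≠ β}` is infinite. -/
lemma Bp_infinite (φ : Γ → Γ)
    (hiter : Function.Injective fun n : ℕ => φ^[n]) :
    ∀ p : ℕ, 1 ≤ p → {β : Γ | φ^[p] β ≠ β}.Infinite := by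
  intro p hp
  by_contra hinf
  have hS : {β : Γ | φ^[p] β ≠ β}.Finite := Set.not_infinite.mp hinf
  set ψ := φ^[p] with hψdef
  set S := {β : Γ | ψ β ≠ β} with hSdef
  set T := S ∪ ψ '' S with hTdef
  have hTfin : T.Finite := hS.union (hS.image ψ)
  have hfix : ∀ β ∉ S, ψ β = β := fun β hβ => not_not.mp hβ
  have hfix_iter : ∀ β ∉ S, ∀ k : ℕ, ψ^[k] β = β := by
    intro β hβ k
    induction k with
    | zero => rfl
    | succ k ih => rw [Function.iterate_succ_apply', ih, hfix β hβ]
  have hmemT : ∀ β ∈ S, ∀ k : ℕ, ψ^[k] β ∈ T := by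
    intro β hβ k
    induction k with
    | zero => exact Set.mem_union_left _ hβ
    | succ k ih =>
        rw [Function.iterate_succ_apply']
        by_cases hmem : ψ^[k] β ∈ S
        · exact Set.mem_union_right _ ⟨_, hmem, rfl⟩
        · rw [hfix _ hmem]
          exact ih
  haveI := hS.to_subtype
  haveI := hTfin.to_subtype
  obtain ⟨k, l, hkl, hfeq⟩ := Finite.exists_ne_map_eq_of_infinite
    (fun k : ℕ => fun b : S => (⟨ψ^[k] b, hmemT b b.2 k⟩ : T))
  have hψeq : ψ^[k] = ψ^[l] := by
    funext β
    by_cases hβ : β ∈ S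
    · exact Subtype.ext_iff.mp (congrFun hfeq ⟨β, hβ⟩)
    · rw [hfix_iter β hβ k, hfix_iter β hβ l]
  have hiterate : φ^[p * k] = φ^[p * l] := by
    rw [Function.iterate_mul, Function.iterate_mul]
    exact hψeq
  have := hiter hiterate
  exact hkl (Nat.eq_of_mul_eq_mul_left (by omega) this)

end Aux

/-! ### Diagonalization -/

section Diag

variable {F : Type*} [Field F] {Γ : Type*} (φ : Γ → Γ)
  (hφ : ∀ p : ℕ, 1 ≤ p → {β : Γ | φ^[p] β ≠ β}.Infinite)

/-- Recursively constructed finite sets of "used" points. -/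
noncomputable def uset : ℕ → {U : Set Γ // U.Finite}
  | 0 => ⟨∅, Set.finite_empty⟩
  | n + 1 =>
      ⟨(uset n).1 ∪
        {(((hφ (n.unpair.1 + 1) (Nat.le_add_left 1 _)).diff (uset n).2).nonempty).some,
         φ^[n.unpair.1 + 1]
           ((((hφ (n.unpair.1 + 1) (Nat.le_add_left 1 _)).diff (uset n).2).nonempty).some)},
       (uset n).2.union ((Set.finite_singleton _).insert _)⟩

/-- The fresh point chosen at step `n`. -/
noncomputable def bb (n : ℕ) : Γ :=
  (((hφ (n.unpair.1 + 1) (Nat.le_add_left 1 _)).diff (uset φ hφ n).2).nonempty).some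

lemma bb_spec (n : ℕ) :
    bb φ hφ n ∈ {β : Γ | φ^[n.unpair.1 + 1] β ≠ β} \ (uset φ hφ n).1 :=
  Set.Nonempty.some_mem _

lemma uset_succ (n : ℕ) :
    (uset φ hφ (n + 1)).1 =
      (uset φ hφ n).1 ∪ {bb φ hφ n, φ^[n.unpair.1 + 1] (bb φ hφ n)} := rfl

lemma uset_mono : ∀ {n m : ℕ}, n ≤ m → (uset φ hφ n).1 ⊆ (uset φ hφ m).1 := by
  intro n m h
  induction m, h using Nat.le_induction with
  | base => exact subset_rfl
  | succ m hm ih =>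
      refine ih.trans ?_
      rw [uset_succ]
      exact Set.subset_union_left

open Classical in
/-- Recursively constructed partial colouring. -/
noncomputable def xf : ℕ → Γ → F
  | 0 => fun _ => 0
  | n + 1 => fun β =>
      if β = bb φ hφ n then xf n (φ^[n.unpair.1 + 1] (bb φ hφ n)) + 1 else xf n β

open Classical in
lemma xf_succ_apply (n : ℕ) (β : Γ) :
    xf (F := F) φ hφ (n + 1) β =
      if β = bb φ hφ n then
        xf (F := F) φ hφ n (φ^[n.unpair.1 + 1] (bb φ hφ n)) + 1
      else xf (F := F) φ hφ n β := rfl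

lemma xf_stable : ∀ n m : ℕ, n ≤ m → ∀ β ∈ (uset φ hφ n).1,
    xf (F := F) φ hφ m β = xf φ hφ n β := by
  intro n m h
  induction m, h using Nat.le_induction with
  | base => intro β _; rfl
  | succ m hm ih =>
      intro β hβ
      have hne : β ≠ bb φ hφ m := by
        intro hc
        exact (bb_spec φ hφ m).2 (hc ▸ uset_mono φ hφ hm hβ)
      rw [xf_succ_apply φ hφ m β, if_neg hne]
      exact ih β hβ

open Classical in
/-- The diagonal function. -/
noncomputable def XX : Γ → F := fun β =>
  if h : ∃ n, β ∈ (uset φ hφ n).1 then xf φ hφ h.choose β else 0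

open Classical in
lemma XX_def (β : Γ) :
    XX (F := F) φ hφ β =
      if h : ∃ n, β ∈ (uset φ hφ n).1 then xf (F := F) φ hφ h.choose β else 0 := rfl

lemma XX_eq (n : ℕ) (β : Γ) (hβ : β ∈ (uset φ hφ n).1) :
    XX (F := F) φ hφ β = xf φ hφ n β := by
  have hex : ∃ k, β ∈ (uset φ hφ k).1 := ⟨n, hβ⟩
  rw [XX_def φ hφ β, dif_pos hex]
  have hcs : β ∈ (uset φ hφ hex.choose).1 := hex.choose_spec
  have h1 : xf (F := F) φ hφ (max hex.choose n) β = xf φ hφ hex.choose β :=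
    xf_stable φ hφ hex.choose _ (le_max_left _ _) β hcs
  have h2 : xf (F := F) φ hφ (max hex.choose n) β = xf φ hφ n β :=
    xf_stable φ hφ n _ (le_max_right _ _) β hβ
  rw [← h1, h2]

lemma bb_inj : Function.Injective (bb φ hφ) := by
  have key : ∀ n m : ℕ, n < m → bb φ hφ n ≠ bb φ hφ m := by
    intro n m h heq
    have h1 : bb φ hφ n ∈ (uset φ hφ m).1 := by
      apply uset_mono φ hφ h
      rw [uset_succ]
      exact Set.mem_union_right _ (Set.mem_insert _ _)
    rw [heq] at h1
    exact (bb_spec φ hφ m).2 h1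
  intro n m hnm
  rcases lt_trichotomy n m with h | h | h
  · exact absurd hnm (key n m h)
  · exact h
  · exact absurd hnm.symm (key m n h)

lemma XX_diff_infinite (p : ℕ) (hp : 1 ≤ p) :
    {β : Γ | XX (F := F) φ hφ β ≠ XX φ hφ (φ^[p] β)}.Infinite := by
  have hmem : ∀ j : ℕ, bb φ hφ (Nat.pair (p - 1) j) ∈
      {β : Γ | XX (F := F) φ hφ β ≠ XX φ hφ (φ^[p] β)} := by
    intro j
    set n := Nat.pair (p - 1) j with hn
    have hpn : n.unpair.1 + 1 = p := by
      rw [hn, Nat.unpair_pair]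
      omega
    set β := bb φ hφ n with hβdef
    have hβU : β ∈ (uset φ hφ (n + 1)).1 := by
      rw [uset_succ]
      exact Set.mem_union_right _ (Set.mem_insert _ _)
    have hψU : φ^[p] β ∈ (uset φ hφ (n + 1)).1 := by
      rw [uset_succ, ← hpn]
      exact Set.mem_union_right _ (Set.mem_insert_of_mem _ rfl)
    have hne : φ^[p] β ≠ β := by
      rw [← hpn]
      exact (bb_spec φ hφ n).1
    simp only [Set.mem_setOf_eq]
    rw [XX_eq φ hφ (n + 1) β hβU, XX_eq φ hφ (n + 1) _ hψU]
    have e1 : xf (F := F) φ hφ (n + 1) β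
        = xf (F := F) φ hφ n (φ^[n.unpair.1 + 1] (bb φ hφ n)) + 1 := by
      rw [xf_succ_apply φ hφ n β, if_pos rfl]
    have e2 : xf (F := F) φ hφ (n + 1) (φ^[p] β) = xf (F := F) φ hφ n (φ^[p] β) := by
      rw [xf_succ_apply φ hφ n (φ^[p] β), if_neg hne]
    rw [e1, e2, hpn]
    intro hc
    have : (1 : F) = 0 := by
      have := hc
      nth_rewrite 2 [← add_zero (xf (F := F) φ hφ n (φ^[p] β))] at this
      exact add_left_cancel this
    exact one_ne_zero this
  have hinj : Function.Injective fun j : ℕ => bb φ hφ (Nat.pair (p - 1) j) := by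
    intro j j' hjj
    have := bb_inj φ hφ hjj
    have h2 := congrArg Nat.unpair this
    simp only [Nat.unpair_pair] at h2
    exact (Prod.mk.injEq _ _ _ _).mp h2 |>.2
  exact Set.infinite_of_injective_forall_mem hinj hmem

end Diag

/-- If `ent_set(σ_φ) = +∞` and `ent_set(σ_{φ,𝔴}) = 0`, then `σ_{φ,𝔴}` is not finite
fibre. -/
theorem stmt_17 {F : Type*} [Field F] [Fintype F] {Γ : Type*} [Nonempty Γ]
    (φ : Γ → Γ) (w : Γ → F)
    (h1 : entSet (wshift φ (1 : Γ → F)) = ⊤)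
    (h2 : entSet (wshift φ w) = 0) :
    ¬ FiniteFibre (wshift φ w) := by
  intro hFF
  have hx := h1_extract φ h1
  have hiter : Function.Injective fun n : ℕ => φ^[n] := iter_distinct φ hx
  have hφinf : ∀ p : ℕ, 1 ≤ p → {β : Γ | φ^[p] β ≠ β}.Infinite :=
    Bp_infinite φ hiter
  obtain ⟨p, hp, hfin⟩ := cofinite_agree φ w h2 hFF (XX (F := F) φ hφinf)
  exact (XX_diff_infinite φ hφinf p hp) hfin
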